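/- Let Λ be a k-graph with a fully reducible vertex w with color set B ∋ b, and let ℓ(γ) denote the number of co-bridge edges occurring in a path γ in the 1-skeleton of Λ. If γ and η are paths in the 1-skeleton with γ ∼_Λ η (i.e., they represent the same morphism of Λ), then ℓ(γ) = ℓ(η). Consequently, the assignment 𝔡(γ) = d(γ) − ℓ(γ)·b defines a well-defined functor 𝔡 : Λ → ℤ^k. -/
import Mathlib


open CategoryTheory

/-- A higher-rank graph of rank `k`: a countable category `Obj` together with a degree
functor `d` to `ℕ^k` (viewed as a one-object category) satisfying the unique
factorization property.  Composition is written `≫` (diagrammatic); a morphism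
`f : a ⟶ b` has source `s f = a` and range `r f = b`, and the paper's composite `μν`
(ν first, then μ) is `ν ≫ μ`. -/
structure KGraph (k : ℕ) : Type 1 where
  Obj : Type
  [cat : Category.{0} Obj]
  d : ∀ {a b : Obj}, (a ⟶ b) → (Fin k → ℕ)
  d_id : ∀ a : Obj, d (𝟙 a) = 0
  d_comp : ∀ {a b c : Obj} (f : a ⟶ b) (g : b ⟶ c), d (f ≫ g) = d f + d g
  countable : Countable (Σ a : Obj, Σ b : Obj, a ⟶ b)
  factorization : ∀ {a c : Obj} (lam : a ⟶ c) (m n : Fin k → ℕ),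
    d lam = m + n →
    ∃! p : Σ b : Obj, (a ⟶ b) × (b ⟶ c),
      d p.2.1 = n ∧ d p.2.2 = m ∧ p.2.1 ≫ p.2.2 = lam

attribute [instance] KGraph.cat

namespace KGraph

variable {k : ℕ} (Λ : KGraph k)

/-- `f` is an edge of color `i` (an element of `Λ^{e_i}`). -/
def IsEdge {a b : Λ.Obj} (i : Fin k) (f : a ⟶ b) : Prop := Λ.d f = Pi.single i 1

/-- One (directed) step in the `ℰ`-colored 1-skeleton. -/
def edgeStep (ℰ : Set (Fin k)) (a b : Λ.Obj) : Prop :=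
  ∃ i ∈ ℰ, ∃ f : a ⟶ b, Λ.IsEdge i f

/-- `x` lies in the neighborhood `U_w^ℰ`, the (undirected) connected component of `w`
in the subgraph of the 1-skeleton with colors in `ℰ`. -/
def Nbhd (ℰ : Set (Fin k)) (w x : Λ.Obj) : Prop :=
  Relation.EqvGen (Λ.edgeStep ℰ) w x

/-- `w` is reducible with color set `B`. -/
def Reducible (B : Set (Fin k)) (w : Λ.Obj) : Prop :=
  ∃ v : Λ.Obj,
    (∀ (i : Fin k) (μ : v ⟶ w), Λ.IsEdge i μ → i ∈ B) ∧
    (∀ b ∈ B, ∃! p : Σ u : Λ.Obj, u ⟶ w, Λ.IsEdge b p.2) ∧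
    (∀ b ∈ B, ∀ f : w ⟶ w, ¬ Λ.IsEdge b f) ∧
    (∀ (b : Fin k) {u : Λ.Obj} (f : u ⟶ w), b ∈ B → Λ.IsEdge b f → u = v)

/-- `w` is fully reducible with color set `B`: every vertex of `U_w^ℰ` (`ℰ = Bᶜ`) is
reducible with color set `B`, and the bridge edges are disjoint from the co-bridge
edges (no `B`-colored edge has both endpoints in `U_w^ℰ`). -/
def FullyReducible (B : Set (Fin k)) (w : Λ.Obj) : Prop :=
  (∀ x : Λ.Obj, Λ.Nbhd Bᶜ w x → Λ.Reducible B x) ∧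
  ∀ (b : Fin k) {x y : Λ.Obj} (f : x ⟶ y),
    b ∈ B → Λ.Nbhd Bᶜ w x → Λ.Nbhd Bᶜ w y → ¬ Λ.IsEdge b f

/-- A set `F` of parallel edges `u ⟶ x` is stationary with color set `B`. -/
def Stationary (B : Set (Fin k)) {u x : Λ.Obj} (F : Set ((u : Λ.Obj) ⟶ x)) : Prop :=
  (∀ f ∈ F, ∃ i, Λ.IsEdge i f) ∧
  (∀ f ∈ F, ∀ {y : Λ.Obj} (lam : x ⟶ y) (b : Fin k), b ∈ B → Λ.IsEdge b lam →
    ∀ {z : Λ.Obj} (μ : u ⟶ z) (ν : z ⟶ y) (i j : Fin k),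
      Λ.IsEdge i μ → Λ.IsEdge j ν → μ ≫ ν = f ≫ lam →
      ∃ hz : z = x, (μ ≫ eqToHom hz) ∈ F) ∧
  (∀ f ∈ F, ∀ {y : Λ.Obj} (lam : y ⟶ u) (b : Fin k), b ∈ B → Λ.IsEdge b lam →
    ∀ {z : Λ.Obj} (μ : y ⟶ z) (ν : z ⟶ x) (i j : Fin k),
      Λ.IsEdge i μ → Λ.IsEdge j ν → μ ≫ ν = lam ≫ f →
      ∃ hz : z = u, (eqToHom hz.symm ≫ ν) ∈ F)

/-- The set of `B`-colored edges from `v` to `x` (the bridge edges into `x` when `v` is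
the common source). -/
def BridgeSet (B : Set (Fin k)) (v x : Λ.Obj) : Set ((v : Λ.Obj) ⟶ x) :=
  {f | ∃ b ∈ B, Λ.IsEdge b f}

/-- The hypothesis set `H_R` of the move reduction: `w` is fully reducible with color
set `B` and all bridge edge sets are stationary with color set `B`. -/
def HR (B : Set (Fin k)) (w : Λ.Obj) : Prop :=
  Λ.FullyReducible B w ∧
  ∀ x : Λ.Obj, Λ.Nbhd Bᶜ w x → ∀ v : Λ.Obj, Λ.Stationary B (Λ.BridgeSet B v x)

def RowFinite : Prop :=
  ∀ (x : Λ.Obj) (i : Fin k), Finite {p : Σ u : Λ.Obj, u ⟶ x // Λ.IsEdge i p.2}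

def SourceFree : Prop :=
  ∀ (x : Λ.Obj) (i : Fin k), ∃ (u : Λ.Obj) (f : u ⟶ x), Λ.IsEdge i f

end KGraph

/-- The product degree `d₁ × d₂` on the product category. -/
def prodD {k l : ℕ} (Λ : KGraph k) (Ω : KGraph l) {a b : Λ.Obj × Ω.Obj} (f : a ⟶ b) :
    Fin (k + l) → ℕ :=
  Fin.append (Λ.d f.1) (Ω.d f.2)

/-- The vertices of the 1-skeleton of `Λ`. -/
structure Skel {k : ℕ} (Λ : KGraph k) : Type where
  obj : Λ.Obj

/-- The 1-skeleton of `Λ` as a (colored) quiver: its arrows are the edges of `Λ`. -/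
instance skelQuiver {k : ℕ} (Λ : KGraph k) : Quiver (Skel Λ) :=
  ⟨fun a b => {f : a.obj ⟶ b.obj // ∃ i, Λ.IsEdge i f}⟩

/-- The canonical quotient functor `Π : G(Λ)* → Λ` on paths of the 1-skeleton;
two paths `γ, η` satisfy `γ ∼_Λ η` iff `skelPi Λ γ = skelPi Λ η`. -/
def skelPi {k : ℕ} (Λ : KGraph k) : ∀ {a b : Skel Λ}, Quiver.Path a b → (a.obj ⟶ b.obj)
  | _, _, Quiver.Path.nil => 𝟙 _
  | _, _, Quiver.Path.cons p e => skelPi Λ p ≫ e.1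

open Classical in
/-- The number `ℓ(γ)` of co-bridge edges (edges with color in `B` and source in `U`)
occurring in a 1-skeleton path `γ`. -/
noncomputable def cobridgeCount {k : ℕ} (Λ : KGraph k) (B : Set (Fin k))
    (U : Set Λ.Obj) : ∀ {a b : Skel Λ}, Quiver.Path a b → ℕ
  | _, _, Quiver.Path.nil => 0
  | _, _, @Quiver.Path.cons _ _ _ c _ p e =>
      cobridgeCount Λ B U p + (if c.obj ∈ U ∧ ∃ b' ∈ B, Λ.IsEdge b' e.1 then 1 else 0)


section Aux

variable {k : ℕ} {Λ : KGraph k}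

lemma isEdge_color_unique {a c : Λ.Obj} {f : a ⟶ c} {i j : Fin k}
    (hi : Λ.IsEdge i f) (hj : Λ.IsEdge j f) : i = j := by
  by_contra hne
  have h : (Pi.single i 1 : Fin k → ℕ) = Pi.single j 1 := hi.symm.trans hj
  have h2 := congrFun h i
  rw [Pi.single_eq_same, Pi.single_eq_of_ne hne] at h2
  exact one_ne_zero h2

lemma eq_of_d_eq_zero {a c : Λ.Obj} (f : a ⟶ c) (h : Λ.d f = 0) :
    ∃ h : a = c, f = eqToHom h := by
  obtain ⟨p, -, hun⟩ := Λ.factorization f 0 0 (by simpa using h)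
  have e1 : (⟨a, 𝟙 a, f⟩ : Σ b : Λ.Obj, (a ⟶ b) × (b ⟶ c)) = p :=
    hun _ ⟨Λ.d_id a, h, Category.id_comp f⟩
  have e2 : (⟨c, f, 𝟙 c⟩ : Σ b : Λ.Obj, (a ⟶ b) × (b ⟶ c)) = p :=
    hun _ ⟨h, Λ.d_id c, Category.comp_id f⟩
  obtain ⟨rfl, h3⟩ := Sigma.mk.inj_iff.mp (e1.trans e2.symm)
  refine ⟨rfl, ?_⟩
  have h4 : ((𝟙 a, f) : (a ⟶ a) × (a ⟶ a)) = (f, 𝟙 a) := eq_of_heq h3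
  have := congrArg Prod.fst h4
  simpa using this.symm

lemma peel {a m m' c : Λ.Obj} (g : a ⟶ m) (e : m ⟶ c) (g' : a ⟶ m') (e' : m' ⟶ c)
    {i : Fin k} (he : Λ.IsEdge i e) (he' : Λ.IsEdge i e') (hd : Λ.d g = Λ.d g')
    (hcomp : g ≫ e = g' ≫ e') :
    ∃ h : m' = m, e' = eqToHom h ≫ e ∧ g' = g ≫ eqToHom h.symm := by
  obtain ⟨p, -, hun⟩ := Λ.factorization (g ≫ e) (Pi.single i 1) (Λ.d g)
    (by rw [Λ.d_comp, he, add_comm])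
  have e1 : (⟨m, g, e⟩ : Σ z : Λ.Obj, (a ⟶ z) × (z ⟶ c)) = p := hun _ ⟨rfl, he, rfl⟩
  have e2 : (⟨m', g', e'⟩ : Σ z : Λ.Obj, (a ⟶ z) × (z ⟶ c)) = p :=
    hun _ ⟨hd.symm, he', hcomp.symm⟩
  obtain ⟨rfl, h3⟩ := Sigma.mk.inj_iff.mp (e2.trans e1.symm)
  have h4 : ((g', e') : (a ⟶ m') × (m' ⟶ c)) = (g, e) := eq_of_heq h3
  refine ⟨rfl, ?_, ?_⟩
  · simpa using (congrArg Prod.snd h4)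
  · simpa using (congrArg Prod.fst h4)

lemma swap_exists {m c' c : Λ.Obj} (f : m ⟶ c') (e : c' ⟶ c) {i j : Fin k}
    (hf : Λ.IsEdge i f) (he : Λ.IsEdge j e) :
    ∃ (z : Λ.Obj) (f' : m ⟶ z) (e' : z ⟶ c),
      Λ.IsEdge j f' ∧ Λ.IsEdge i e' ∧ f' ≫ e' = f ≫ e := by
  obtain ⟨⟨z, f', e'⟩, ⟨h1, h2, h3⟩, -⟩ :=
    Λ.factorization (f ≫ e) (Pi.single i 1) (Pi.single j 1)
      (by rw [Λ.d_comp, hf, he, add_comm])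
  exact ⟨z, f', e', h1, h2, h3⟩

lemma exists_path_rep {a c : Λ.Obj} (f : a ⟶ c) :
    ∃ γ : Quiver.Path (⟨a⟩ : Skel Λ) ⟨c⟩, skelPi Λ γ = f := by
  suffices H : ∀ (N : ℕ) {a c : Λ.Obj} (f : a ⟶ c), (∑ i, Λ.d f i) = N →
      ∃ γ : Quiver.Path (⟨a⟩ : Skel Λ) ⟨c⟩, skelPi Λ γ = f from H _ f rfl
  intro N
  induction N with
  | zero =>
    intro a c f hf
    have h0 : Λ.d f = 0 := by
      funext i
      have := Finset.sum_eq_zero_iff.mp hf i (Finset.mem_univ i)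
      simpa using this
    obtain ⟨rfl, rfl⟩ := eq_of_d_eq_zero f h0
    exact ⟨Quiver.Path.nil, by simp [skelPi]⟩
  | succ N ih =>
    intro a c f hf
    have hpos : ∃ i, 0 < Λ.d f i := by
      by_contra h
      push_neg at h
      simp only [Nat.le_zero] at h
      rw [Finset.sum_eq_zero (fun i _ => h i)] at hf
      omega
    obtain ⟨i, hi⟩ := hpos
    obtain ⟨⟨z, g, e⟩, ⟨h1, h2, h3⟩, -⟩ :=
      Λ.factorization f (Pi.single i 1) (Λ.d f - Pi.single i 1)
        (by
          funext j
          rcases eq_or_ne j i with rfl | hne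
          · simp only [Pi.add_apply, Pi.sub_apply, Pi.single_eq_same]
            omega
          · simp [Pi.single_eq_of_ne hne])
    have hsum : (∑ j, Λ.d g j) = N := by
      have hdf : Λ.d f = Λ.d g + Λ.d e := by rw [← h3, Λ.d_comp]
      have h4 : (∑ j, Λ.d f j) = (∑ j, Λ.d g j) + ∑ j, Λ.d e j := by
        rw [hdf]; exact Finset.sum_add_distrib
      have h5 : (∑ j, Λ.d e j) = 1 := by
        rw [h2]
        simp [Finset.sum_pi_single']
      omega
    obtain ⟨γ, hγ⟩ := ih g hsum
    refine ⟨γ.cons ⟨e, i, h2⟩, ?_⟩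
    simp only [skelPi]
    rw [hγ, h3]

lemma skelPi_comp {a b c : Skel Λ} (p : Quiver.Path a b) (q : Quiver.Path b c) :
    skelPi Λ (p.comp q) = skelPi Λ p ≫ skelPi Λ q := by
  induction q with
  | nil => simp [skelPi]
  | cons q e ih =>
    show skelPi Λ ((p.comp q).cons e) = skelPi Λ p ≫ skelPi Λ (q.cons e)
    simp only [skelPi]
    rw [ih, Category.assoc]

open Classical in
lemma count_cons (B : Set (Fin k)) (U : Set Λ.Obj) {a c0 c : Skel Λ}
    (p : Quiver.Path a c0) (e : c0 ⟶ c) {i : Fin k} (hi : Λ.IsEdge i e.1) :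
    cobridgeCount Λ B U (p.cons e)
      = cobridgeCount Λ B U p + (if c0.obj ∈ U ∧ i ∈ B then 1 else 0) := by
  have hiff : (c0.obj ∈ U ∧ ∃ b' ∈ B, Λ.IsEdge b' e.1) ↔ (c0.obj ∈ U ∧ i ∈ B) := by
    constructor
    · rintro ⟨h1, b', hb', he⟩
      exact ⟨h1, (isEdge_color_unique he hi) ▸ hb'⟩
    · rintro ⟨h1, h2⟩
      exact ⟨h1, i, h2, hi⟩
  simp only [cobridgeCount]
  rw [if_congr hiff rfl rfl]

open Classical in
lemma count_comp (B : Set (Fin k)) (U : Set Λ.Obj) {a b c : Skel Λ}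
    (p : Quiver.Path a b) (q : Quiver.Path b c) :
    cobridgeCount Λ B U (p.comp q) = cobridgeCount Λ B U p + cobridgeCount Λ B U q := by
  induction q with
  | nil => simp [cobridgeCount]
  | cons q e ih =>
    show cobridgeCount Λ B U ((p.comp q).cons e)
        = cobridgeCount Λ B U p + cobridgeCount Λ B U (q.cons e)
    simp only [cobridgeCount]
    rw [ih, add_assoc]

lemma nbhd_iff {B : Set (Fin k)} {w x y : Λ.Obj} {i : Fin k} (hi : i ∉ B) (g : x ⟶ y)
    (hg : Λ.IsEdge i g) : Λ.Nbhd Bᶜ w x ↔ Λ.Nbhd Bᶜ w y := by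
  have hstep : Λ.edgeStep Bᶜ x y := ⟨i, hi, g, hg⟩
  constructor
  · exact fun h => h.trans _ _ _ (Relation.EqvGen.rel _ _ hstep)
  · exact fun h => h.trans _ _ _ (Relation.EqvGen.symm _ _ (Relation.EqvGen.rel _ _ hstep))

open Classical in
lemma key_swap {B : Set (Fin k)} {w : Λ.Obj}
    (hfull : Λ.FullyReducible B w)
    (hstat : ∀ x : Λ.Obj, Λ.Nbhd Bᶜ w x → ∀ v : Λ.Obj,
      Λ.Stationary B (Λ.BridgeSet B v x))
    {A Z Z' C : Λ.Obj} (μ : A ⟶ Z) (ν : Z ⟶ C) (μ' : A ⟶ Z') (ν' : Z' ⟶ C)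
    {i j : Fin k} (hμ : Λ.IsEdge i μ) (hν : Λ.IsEdge j ν) (hμ' : Λ.IsEdge j μ')
    (hν' : Λ.IsEdge i ν') (hcomp : μ ≫ ν = μ' ≫ ν') :
    (((if A ∈ {x | Λ.Nbhd Bᶜ w x} ∧ i ∈ B then 1 else 0)
        + (if Z ∈ {x | Λ.Nbhd Bᶜ w x} ∧ j ∈ B then 1 else 0) : ℕ)
      = (if A ∈ {x | Λ.Nbhd Bᶜ w x} ∧ j ∈ B then 1 else 0)
        + (if Z' ∈ {x | Λ.Nbhd Bᶜ w x} ∧ i ∈ B then 1 else 0)) := by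
  by_cases hiB : i ∈ B <;> by_cases hjB : j ∈ B
  · have hZZ' : (Z ∈ {x | Λ.Nbhd Bᶜ w x}) ↔ (Z' ∈ {x | Λ.Nbhd Bᶜ w x}) := by
      constructor
      · intro hZ
        obtain ⟨hz, -⟩ := (hstat Z hZ A).2.1 μ ⟨i, hiB, hμ⟩ ν j hjB hν μ' ν' j i hμ' hν'
          hcomp.symm
        show Λ.Nbhd Bᶜ w Z'
        rw [hz]; exact hZ
      · intro hZ'
        obtain ⟨hz, -⟩ := (hstat Z' hZ' A).2.1 μ' ⟨j, hjB, hμ'⟩ ν' i hiB hν' μ ν i j hμ hν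
          hcomp
        show Λ.Nbhd Bᶜ w Z
        rw [hz]; exact hZ'
    simp [hiB, hjB, hZZ']
  · have hAZ' : (A ∈ {x | Λ.Nbhd Bᶜ w x}) ↔ (Z' ∈ {x | Λ.Nbhd Bᶜ w x}) :=
      nbhd_iff hjB μ' hμ'
    simp [hiB, hjB, hAZ']
  · have hAZ : (A ∈ {x | Λ.Nbhd Bᶜ w x}) ↔ (Z ∈ {x | Λ.Nbhd Bᶜ w x}) :=
      nbhd_iff hiB μ hμ
    simp [hiB, hjB, hAZ]
  · simp [hiB, hjB]

open Classical in
lemma bubble {B : Set (Fin k)} {w : Λ.Obj}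
    (hfull : Λ.FullyReducible B w)
    (hstat : ∀ x : Λ.Obj, Λ.Nbhd Bᶜ w x → ∀ v : Λ.Obj,
      Λ.Stationary B (Λ.BridgeSet B v x)) :
    ∀ {a c : Skel Λ} (η : Quiver.Path a c) (i : Fin k),
      0 < Λ.d (skelPi Λ η) i →
      ∃ (m : Skel Λ) (p : Quiver.Path a m) (e : m ⟶ c),
        Λ.IsEdge i e.1 ∧ skelPi Λ (p.cons e) = skelPi Λ η ∧
        cobridgeCount Λ B {x | Λ.Nbhd Bᶜ w x} (p.cons e)
          = cobridgeCount Λ B {x | Λ.Nbhd Bᶜ w x} η := by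
  intro a c η
  induction η with
  | nil =>
    intro i hi
    simp only [skelPi] at hi
    rw [Λ.d_id] at hi
    simp at hi
  | @cons b c2 p e ih =>
    intro i hi
    obtain ⟨j, hj⟩ := e.2
    by_cases hji : j = i
    · subst hji
      exact ⟨b, p, e, hj, rfl, rfl⟩
    · have hj' : Λ.d e.1 = Pi.single j 1 := hj
      have hpos : 0 < Λ.d (skelPi Λ p) i := by
        simp only [skelPi, Λ.d_comp, hj'] at hi
        rw [Pi.add_apply, Pi.single_eq_of_ne (fun h => hji h.symm)] at hi
        omega
      obtain ⟨m2, p2, f, hf, hπ, hℓ⟩ := ih i hpos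
      obtain ⟨z, f', e', hf', he', hcomp⟩ := swap_exists f.1 e.1 hf hj
      refine ⟨⟨z⟩, p2.cons ⟨f', j, hf'⟩, ⟨e', i, he'⟩, he', ?_, ?_⟩
      · simp only [skelPi] at hπ ⊢
        rw [Category.assoc, hcomp, ← Category.assoc, hπ]
      · rw [count_cons _ _ _ _ he', count_cons _ _ _ _ hf', count_cons _ _ _ _ hj]
        rw [count_cons _ _ _ _ hf] at hℓ
        have hswap := key_swap hfull hstat f.1 e.1 f' e' hf hj hf' he' hcomp.symm
        dsimp only at hswap hℓ ⊢
        omega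

open Classical in
lemma count_invariant {B : Set (Fin k)} {w : Λ.Obj}
    (hfull : Λ.FullyReducible B w)
    (hstat : ∀ x : Λ.Obj, Λ.Nbhd Bᶜ w x → ∀ v : Λ.Obj,
      Λ.Stationary B (Λ.BridgeSet B v x)) :
    ∀ {a c : Skel Λ} (γ η : Quiver.Path a c), skelPi Λ γ = skelPi Λ η →
      cobridgeCount Λ B {x | Λ.Nbhd Bᶜ w x} γ
        = cobridgeCount Λ B {x | Λ.Nbhd Bᶜ w x} η := by
  intro a c γ
  induction γ with
  | nil =>
    intro η h
    cases η with
    | nil => rfl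
    | cons p e =>
      exfalso
      obtain ⟨i, hi⟩ := e.2
      have hi' : Λ.d e.1 = Pi.single i 1 := hi
      have hd := congrFun (congrArg Λ.d h) i
      simp only [skelPi, Λ.d_comp, hi'] at hd
      rw [Λ.d_id] at hd
      rw [Pi.zero_apply, Pi.add_apply, Pi.single_eq_same] at hd
      omega
  | @cons b c2 p e ih =>
    intro η h
    obtain ⟨i, hi⟩ := e.2
    have hi' : Λ.d e.1 = Pi.single i 1 := hi
    have hpos : 0 < Λ.d (skelPi Λ η) i := by
      rw [← h]
      simp only [skelPi, Λ.d_comp, hi']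
      rw [Pi.add_apply, Pi.single_eq_same]
      omega
    obtain ⟨m2, p2, e2, he2, hπ, hℓ⟩ := bubble hfull hstat η i hpos
    have h' : skelPi Λ p ≫ e.1 = skelPi Λ p2 ≫ e2.1 := by
      have h2 := h.trans hπ.symm
      simpa only [skelPi] using h2
    have hdeq : Λ.d (skelPi Λ p) = Λ.d (skelPi Λ p2) := by
      have h2 := congrArg Λ.d h'
      rw [Λ.d_comp, Λ.d_comp, hi, he2] at h2
      exact add_right_cancel h2
    obtain ⟨hm, he', hg'⟩ := peel (skelPi Λ p) e.1 (skelPi Λ p2) e2.1 hi he2 hdeq h'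
    have hm2 : m2 = b := by
      cases m2; cases b; cases hm; rfl
    subst hm2
    simp only [eqToHom_refl, Category.id_comp, Category.comp_id] at he' hg'
    have hc : cobridgeCount Λ B {x | Λ.Nbhd Bᶜ w x} p
        = cobridgeCount Λ B {x | Λ.Nbhd Bᶜ w x} p2 := ih p2 hg'.symm
    rw [← hℓ, count_cons _ _ _ _ hi, count_cons _ _ _ _ he2, hc]

/-- `ℓ` extended to morphisms via a choice of representing path. -/
noncomputable def lmor (B : Set (Fin k)) (U : Set Λ.Obj) {a c : Λ.Obj} (f : a ⟶ c) : ℕ :=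
  cobridgeCount Λ B U (Classical.choose (exists_path_rep f))


end Aux

/-- Lemma `R-lem`: if `w` is fully reducible with color set `B ∋ b`
and the bridge edge sets are stationary, then the co-bridge count `ℓ` is invariant
under the factorization relation `∼_Λ`, and consequently `𝔡(γ) = d(γ) − ℓ(γ)·b`
defines a well-defined functor `𝔡 : Λ → ℤ^k`. -/
theorem cobridgeCount_well_defined {k : ℕ} (Λ : KGraph k) (B : Set (Fin k))
    (b : Fin k) (hb : b ∈ B) (w : Λ.Obj)
    (hrf : Λ.RowFinite) (hsf : Λ.SourceFree)
    (hfull : Λ.FullyReducible B w)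
    (hstat : ∀ x : Λ.Obj, Λ.Nbhd Bᶜ w x → ∀ v : Λ.Obj,
      Λ.Stationary B (Λ.BridgeSet B v x)) :
    (∀ {a c : Skel Λ} (γ η : Quiver.Path a c), skelPi Λ γ = skelPi Λ η →
      cobridgeCount Λ B {x | Λ.Nbhd Bᶜ w x} γ
        = cobridgeCount Λ B {x | Λ.Nbhd Bᶜ w x} η) ∧
    ∃ dd : ∀ {a c : Λ.Obj}, (a ⟶ c) → (Fin k → ℤ),
      (∀ a : Λ.Obj, dd (𝟙 a) = 0) ∧
      (∀ {a c e : Λ.Obj} (f : a ⟶ c) (g : c ⟶ e), dd (f ≫ g) = dd f + dd g) ∧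
      (∀ {a c : Skel Λ} (γ : Quiver.Path a c),
        dd (skelPi Λ γ) = fun i =>
          (Λ.d (skelPi Λ γ) i : ℤ)
            - (cobridgeCount Λ B {x | Λ.Nbhd Bᶜ w x} γ : ℤ) * (Pi.single b 1 : Fin k → ℤ) i) := by
  have key : ∀ {a c : Skel Λ} (γ η : Quiver.Path a c), skelPi Λ γ = skelPi Λ η →
      cobridgeCount Λ B {x | Λ.Nbhd Bᶜ w x} γ
        = cobridgeCount Λ B {x | Λ.Nbhd Bᶜ w x} η :=
    fun γ η h => count_invariant hfull hstat γ η h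
  refine ⟨key, ?_⟩
  set U := {x | Λ.Nbhd Bᶜ w x} with hUdef
  have Lpi : ∀ {a c : Skel Λ} (γ : Quiver.Path a c),
      lmor B U (skelPi Λ γ) = cobridgeCount Λ B U γ := by
    intro a c γ
    exact key _ γ (Classical.choose_spec (exists_path_rep (skelPi Λ γ)))
  have Lid : ∀ a : Λ.Obj, lmor B U (𝟙 a) = 0 := by
    intro a
    have h := Lpi (Quiver.Path.nil : Quiver.Path (⟨a⟩ : Skel Λ) ⟨a⟩)
    simpa only [skelPi, cobridgeCount] using h
  have Lcomp : ∀ {a c e : Λ.Obj} (f : a ⟶ c) (g : c ⟶ e),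
      lmor B U (f ≫ g) = lmor B U f + lmor B U g := by
    intro a c e f g
    have hf := Classical.choose_spec (exists_path_rep (Λ := Λ) f)
    have hg := Classical.choose_spec (exists_path_rep (Λ := Λ) g)
    have hcomp : skelPi Λ ((Classical.choose (exists_path_rep f)).comp
        (Classical.choose (exists_path_rep g))) = f ≫ g := by
      rw [skelPi_comp, hf, hg]
    have h1 : lmor B U (f ≫ g) = cobridgeCount Λ B U
        ((Classical.choose (exists_path_rep f)).comp
          (Classical.choose (exists_path_rep g))) := by
      rw [← hcomp]
      exact Lpi _
    rw [h1, count_comp]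
    rfl
  refine ⟨fun {a c} f => fun idx =>
      ((Λ.d f idx : ℤ) - (lmor B U f : ℤ) * (Pi.single b 1 : Fin k → ℤ) idx), ?_, ?_, ?_⟩
  · intro a
    funext idx
    dsimp only
    rw [Λ.d_id, Lid]
    simp
  · intro a c e f g
    funext idx
    dsimp only
    rw [Λ.d_comp, Lcomp]
    simp only [Pi.add_apply]
    push_cast
    ring
  · intro a c γ
    funext idx
    dsimp only
    rw [Lpi]
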